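/- For any odd prime p with n = (p-1)/2, the double sum over i from n+1 to 2n and j from n+1 to 2n of S(i,j) is congruent to 0 modulo p. -/

import Mathlib

open Finset

/-! For `n < i, j ≤ 2n` with `p = 2n + 1`, the prime `p` divides both `C(2i,i)` and `C(2j,j)`,
so `p²` divides `S(i,j)·C(i+j,i)`; since `i + j < p²`, `p` divides `C(i+j,i)` at most once, hence
every term `S(i,j)` of the sum is divisible by `p`. -/

/-- The super Catalan numbers `S(m,n) = C(2m,m)·C(2n,n)/C(m+n,m)` (the division is exact). -/
def superCatalan (m n : ℕ) : ℕ :=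
  (Nat.choose (2 * m) m * Nat.choose (2 * n) n) / Nat.choose (m + n) m

/-- By Kummer, a carry in `m + n` at some base-`q` digit forces a carry in `m + m` or in `n + n`
at the same digit. -/
theorem padicValNat_choose_add_le (q m n : ℕ) [Fact q.Prime] :
    padicValNat q ((m + n).choose m) ≤
      padicValNat q ((2 * m).choose m) + padicValNat q ((2 * n).choose n) := by
  have hlog (k : ℕ) (hk : k ≤ 2 * (m + n)) : Nat.log q k < Nat.log q (2 * (m + n)) + 1 :=
    Nat.lt_succ_of_le (Nat.log_mono_right hk)
  rw [two_mul m, two_mul n, add_comm m n, padicValNat_choose' (hlog _ (by omega)),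
    padicValNat_choose' (hlog _ (by omega)), padicValNat_choose' (hlog _ (by omega))]
  refine (card_le_card ?_).trans (card_union_le _ _)
  rw [← filter_or]
  exact monotone_filter_right _ fun i _ => by omega

theorem choose_add_dvd_choose_two_mul_mul (m n : ℕ) :
    (m + n).choose m ∣ (2 * m).choose m * (2 * n).choose n := by
  have hm : (2 * m).choose m ≠ 0 := (Nat.choose_pos (by omega)).ne'
  have hn : (2 * n).choose n ≠ 0 := (Nat.choose_pos (by omega)).ne'
  refine (Nat.factorization_prime_le_iff_dvd (Nat.choose_pos (by omega)).ne'
    (mul_ne_zero hm hn)).1 fun q hq => ?_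
  have := Fact.mk hq
  rw [Nat.factorization_mul hm hn, Finsupp.add_apply, Nat.factorization_def _ hq,
    Nat.factorization_def _ hq, Nat.factorization_def _ hq]
  exact padicValNat_choose_add_le q m n

theorem superCatalan_mul_choose (m n : ℕ) :
    superCatalan m n * (m + n).choose m = (2 * m).choose m * (2 * n).choose n :=
  Nat.div_mul_cancel (choose_add_dvd_choose_two_mul_mul m n)

/-- `p²` divides `S(m,n)·C(m+n,m)`, but not `C(m+n,m)` since `m + n < p²`. -/
theorem Nat.Prime.dvd_superCatalan {p m n : ℕ} (hp : p.Prime) (hm : p ∣ (2 * m).choose m)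
    (hn : p ∣ (2 * n).choose n) (hmn : m + n < p ^ 2) : p ∣ superCatalan m n := by
  by_contra h
  have hsq : p ^ 2 ∣ superCatalan m n * (m + n).choose m := by
    rw [superCatalan_mul_choose, sq]
    exact mul_dvd_mul hm hn
  have hchoose : p ^ 2 ∣ (m + n).choose m :=
    ((hp.coprime_iff_not_dvd.2 h).pow_left 2).dvd_of_dvd_mul_left hsq
  have hge := (hp.pow_dvd_iff_le_factorization (Nat.choose_pos (by omega)).ne').1 hchoose
  have hle := Nat.factorization_choose_le_one (k := m) (p := p) hmn
  omega

theorem stmt15 (p : ℕ) (hp : p.Prime) (hodd : Odd p) :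
    (↑(∑ i ∈ Finset.Icc ((p - 1) / 2 + 1) (2 * ((p - 1) / 2)),
          ∑ j ∈ Finset.Icc ((p - 1) / 2 + 1) (2 * ((p - 1) / 2)), superCatalan i j) : ZMod p) =
      0 := by
  obtain ⟨n, rfl⟩ := hodd
  have hn : (2 * n + 1 - 1) / 2 = n := by omega
  rw [hn, ZMod.natCast_eq_zero_iff]
  refine dvd_sum fun i hi => dvd_sum fun j hj => ?_
  rw [mem_Icc] at hi hj
  exact hp.dvd_superCatalan (hp.dvd_choose (by omega) (by omega) (by omega))
    (hp.dvd_choose (by omega) (by omega) (by omega)) (by nlinarith)
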